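/- arXiv:1309.5927 — 4 statements merged into one kernel-verified Lean document; each statement's English description precedes it below -/
import Mathlib

section
/- There exists a family of unranked trees (t_n) for n ≥ 2 such that t_n has n nodes, the minimal dag of t_n has exactly 2 nodes, and the number of distinct sibling sequences of t_n is exactly n. -/
inductive UTree (σ : Type) : Type where
  | node : σ → List (UTree σ) → UTree σ

namespace UTree
variable {σ : Type}

noncomputable instance : DecidableEq (UTree σ) := Classical.decEq _

def children : UTree σ → List (UTree σ)
  | node _ cs => cs

def subs : UTree σ → List (UTree σ)
  | node a cs => node a cs :: (cs.attach.map (fun ⟨c, _⟩ => subs c)).flatten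

def sibs : UTree σ → List (List (UTree σ))
  | node _ cs => cs.tails.filter (fun l => !l.isEmpty)
      ++ (cs.attach.map (fun ⟨c, _⟩ => sibs c)).flatten

def sibseqs (t : UTree σ) : List (List (UTree σ)) := [t] :: sibs t

def edges : UTree σ → ℕ
  | node _ cs => cs.length + (cs.attach.map (fun ⟨c, _⟩ => edges c)).sum

def rootDeg : UTree σ → ℕ
  | node _ cs => cs.length

def nodes : UTree σ → ℕ
  | node _ cs => 1 + (cs.attach.map (fun ⟨c, _⟩ => nodes c)).sum

end UTree

/-! The witness is the star `f(a, …, a)` with `n - 1` leaf children: its subtrees are itself and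
the leaf `a`, and its sibling sequences are the root sequence `[t]` together with the suffixes
`a^k` (`1 ≤ k ≤ n - 1`) of its child list, which are told apart by their lengths. -/

theorem List.filter_not_isEmpty_tails_replicate {α : Type} (k : ℕ) (a : α) :
    (List.replicate k a).tails.filter (fun l => !l.isEmpty)
      = (List.range k).map (fun j => List.replicate (k - j) a) := by
  induction k with
  | zero => simp
  | succ k ih =>
    rw [List.replicate_succ, List.tails_cons, List.range_succ_eq_map]
    simp [ih, ← List.replicate_succ]

theorem List.nodup_map_range_replicate_sub {α : Type} (k : ℕ) (a : α) :
    ((List.range k).map (fun j => List.replicate (k - j) a)).Nodup := by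
  refine List.nodup_range.map_on fun i hi j hj hij => ?_
  have := congrArg List.length hij
  simp only [List.length_replicate, List.mem_range] at this hi hj
  omega

namespace UTree
variable {σ : Type}

def leaf (a : σ) : UTree σ := node a []

@[simp] lemma nodes_leaf (a : σ) : nodes (leaf a) = 1 := by simp [leaf, nodes]

@[simp] lemma subs_leaf (a : σ) : subs (leaf a) = [leaf a] := by simp [leaf, subs]

@[simp] lemma sibs_leaf (a : σ) : sibs (leaf a) = [] := by simp [leaf, sibs]

lemma node_ne_leaf {f : σ} {cs : List (UTree σ)} (hcs : cs ≠ []) (a : σ) :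
    node f cs ≠ leaf a := by
  simp [leaf, hcs]

lemma nodes_node_replicate (f : σ) (k : ℕ) (c : UTree σ) :
    nodes (node f (List.replicate k c)) = 1 + k * nodes c := by
  simp [nodes, List.sum_replicate]

lemma subs_node_replicate (f : σ) (k : ℕ) (c : UTree σ) :
    subs (node f (List.replicate k c))
      = node f (List.replicate k c) :: (List.replicate k (subs c)).flatten := by
  simp [subs]

lemma sibs_node_replicate (f : σ) (k : ℕ) (c : UTree σ) :
    sibs (node f (List.replicate k c))
      = (List.range k).map (fun j => List.replicate (k - j) c)
        ++ (List.replicate k (sibs c)).flatten := by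
  simp [sibs, List.filter_not_isEmpty_tails_replicate]

lemma card_toFinset_subs_node_replicate_leaf (f a : σ) {k : ℕ} (hk : k ≠ 0) :
    (subs (node f (List.replicate k (leaf a)))).toFinset.card = 2 := by
  rw [subs_node_replicate, subs_leaf, List.flatten_replicate_singleton, List.toFinset_cons,
    List.toFinset_replicate_of_ne_zero hk]
  exact Finset.card_pair (node_ne_leaf (by simpa using hk) a)

lemma card_toFinset_sibseqs_node_replicate_leaf (f a : σ) (k : ℕ) :
    (sibseqs (node f (List.replicate k (leaf a)))).toFinset.card = k + 1 := by
  have hroot : [node f (List.replicate k (leaf a))] ∉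
      (List.range k).map (fun j => List.replicate (k - j) (leaf a)) := by
    simp only [List.mem_map, List.mem_range, not_exists, not_and]
    intro j hj hrep
    have : leaf a ∈ [node f (List.replicate k (leaf a))] :=
      hrep ▸ List.mem_replicate.2 ⟨by omega, rfl⟩
    exact node_ne_leaf (by simpa using (by omega : k ≠ 0)) a (List.mem_singleton.1 this).symm
  rw [sibseqs, sibs_node_replicate, sibs_leaf, List.flatten_replicate_nil, List.append_nil,
    List.toFinset_cons, Finset.card_insert_of_notMem (by simpa using hroot),
    List.toFinset_card_of_nodup (List.nodup_map_range_replicate_sub k _), List.length_map,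
    List.length_range]

end UTree

/-- There is a family of trees `t n` (for `n ≥ 2`) with `n` nodes, whose minimal dag has
exactly 2 nodes (2 distinct subtrees) while the fcns-encoded binary dag has `n` nodes
(`n` distinct sibling sequences). -/
theorem exists_family_dag_two_nodes_bdag_n_nodes :
    ∃ t : ℕ → UTree ℕ, ∀ n : ℕ, 2 ≤ n →
      UTree.nodes (t n) = n ∧
      (UTree.subs (t n)).toFinset.card = 2 ∧
      (UTree.sibseqs (t n)).toFinset.card = n := by
  refine ⟨fun n => .node 0 (List.replicate (n - 1) (.leaf 1)), fun n hn => ⟨?_, ?_, ?_⟩⟩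
  · rw [UTree.nodes_node_replicate, UTree.nodes_leaf]; omega
  · exact UTree.card_toFinset_subs_node_replicate_leaf 0 1 (by omega)
  · rw [UTree.card_toFinset_sibseqs_node_replicate_leaf]; omega
end

section
/- For every integer p ≥ 1 and for the polynomial Δ_p(z) = 1 − 4z + 4z^{p+2}, Δ_p has exactly one root of modulus less than 1/2; this root is real and lies in the open interval (1/4, 1/2). For p = 0, Δ_0(z) = (1−2z)² has a double root at 1/2. -/
/-!
A root of `Δ_p` is a fixed point of `z ↦ 1/4 + z^(p+2)`. On the closed disc of radius `1/2` the
map `z ↦ z^n` is Lipschitz with constant `n / 2^(n-1)`, which is `< 1` once `n = p + 2 ≥ 3`, so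
`Δ_p` has at most one root there. A real root in `(1/4, 1/2)` comes from the sign change
`Δ_p(1/4) > 0 > Δ_p(1/2)`.
-/

open Finset

theorem norm_pow_sub_pow_le {R : Type*} [NormedCommRing R] [NormOneClass R] (a b : R) (n : ℕ) :
    ‖a ^ n - b ^ n‖ ≤ ‖a - b‖ * n * max ‖a‖ ‖b‖ ^ (n - 1) := by
  obtain _ | m := n
  · simp
  set M := max ‖a‖ ‖b‖
  have hterm : ∀ i ∈ range (m + 1), ‖a ^ i * b ^ (m - i)‖ ≤ M ^ m := fun i hi => by
    have him : i ≤ m := Nat.lt_succ_iff.mp (mem_range.mp hi)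
    calc ‖a ^ i * b ^ (m - i)‖ ≤ ‖a‖ ^ i * ‖b‖ ^ (m - i) :=
          (norm_mul_le _ _).trans (by gcongr <;> exact norm_pow_le _ _)
      _ ≤ M ^ i * M ^ (m - i) := by gcongr <;> simp [M]
      _ = M ^ m := by rw [← pow_add, Nat.add_sub_cancel' him]
  calc ‖a ^ (m + 1) - b ^ (m + 1)‖
      = ‖(∑ i ∈ range (m + 1), a ^ i * b ^ (m + 1 - 1 - i)) * (a - b)‖ := by
        rw [geom_sum₂_mul]
    _ ≤ (∑ i ∈ range (m + 1), ‖a ^ i * b ^ (m - i)‖) * ‖a - b‖ :=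
        (norm_mul_le _ _).trans (by gcongr; exact norm_sum_le _ _)
    _ ≤ (∑ _i ∈ range (m + 1), M ^ m) * ‖a - b‖ := by gcongr with i hi; exact hterm i hi
    _ = ‖a - b‖ * ↑(m + 1) * M ^ (m + 1 - 1) := by
        simp only [sum_const, card_range, nsmul_eq_mul, add_tsub_cancel_right]; ring

theorem eq_of_sub_eq_pow_sub_pow {R : Type*} [NormedCommRing R] [NormOneClass R]
    {a b : R} {n : ℕ} {r : ℝ} (ha : ‖a‖ ≤ r) (hb : ‖b‖ ≤ r) (hr : n * r ^ (n - 1) < 1)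
    (h : a - b = a ^ n - b ^ n) : a = b := by
  have hM : max ‖a‖ ‖b‖ ^ (n - 1) ≤ r ^ (n - 1) := by gcongr; exact max_le ha hb
  have hle : ‖a - b‖ ≤ ‖a - b‖ * (n * r ^ (n - 1)) :=
    calc ‖a - b‖ = ‖a ^ n - b ^ n‖ := by rw [h]
      _ ≤ ‖a - b‖ * n * max ‖a‖ ‖b‖ ^ (n - 1) := norm_pow_sub_pow_le a b n
      _ ≤ ‖a - b‖ * (n * r ^ (n - 1)) := by rw [mul_assoc]; gcongr
  have : ‖a - b‖ ≤ 0 := by nlinarith [norm_nonneg (a - b)]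
  exact sub_eq_zero.mp (norm_le_zero_iff.mp this)

theorem add_two_lt_two_pow_succ {p : ℕ} (hp : 1 ≤ p) : p + 2 < 2 ^ (p + 1) := by
  have := Nat.lt_two_pow_self (n := p)
  rw [pow_succ]
  omega

theorem add_two_mul_half_pow_succ_lt_one {p : ℕ} (hp : 1 ≤ p) :
    ((p + 2 : ℕ) : ℝ) * (1 / 2) ^ (p + 2 - 1) < 1 := by
  have h : ((p + 2 : ℕ) : ℝ) < 2 ^ (p + 1) := by exact_mod_cast add_two_lt_two_pow_succ hp
  rw [show p + 2 - 1 = p + 1 by omega, one_div, inv_pow, ← div_eq_mul_inv,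
    div_lt_one (by positivity)]
  exact h

theorem eq_of_delta_eq_zero {𝕜 : Type*} [NormedField 𝕜] [CharZero 𝕜] {p : ℕ} (hp : 1 ≤ p)
    {z w : 𝕜} (hz : ‖z‖ ≤ 1 / 2) (hw : ‖w‖ ≤ 1 / 2)
    (hz0 : 1 - 4 * z + 4 * z ^ (p + 2) = 0) (hw0 : 1 - 4 * w + 4 * w ^ (p + 2) = 0) :
    z = w :=
  eq_of_sub_eq_pow_sub_pow hz hw (add_two_mul_half_pow_succ_lt_one hp)
    (by linear_combination (hw0 - hz0) / 4)

theorem exists_delta_eq_zero_mem_Ioo {p : ℕ} (hp : 1 ≤ p) :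
    ∃ x ∈ Set.Ioo (1 / 4 : ℝ) (1 / 2), 1 - 4 * x + 4 * x ^ (p + 2) = 0 := by
  have hcont : ContinuousOn (fun x : ℝ => 1 - 4 * x + 4 * x ^ (p + 2))
      (Set.Icc (1 / 4) (1 / 2)) := by
    fun_prop
  have hpos : (0 : ℝ) < 1 - 4 * (1 / 4) + 4 * (1 / 4) ^ (p + 2) := by positivity
  have hneg : 1 - 4 * (1 / 2) + 4 * (1 / 2 : ℝ) ^ (p + 2) < 0 := by
    have : (1 / 2 : ℝ) ^ p < 1 := pow_lt_one₀ (by norm_num) (by norm_num) (by omega)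
    rw [pow_add]
    linarith
  exact intermediate_value_Ioo' (by norm_num) hcont ⟨hneg, hpos⟩

/-- For `p ≥ 1`, the polynomial `Δ_p(z) = 1 − 4z + 4z^{p+2}` has exactly one root of
modulus less than `1/2`; this root is real and lies in `(1/4, 1/2)`.
For `p = 0`, `Δ_0(z) = (1 − 2z)²`. -/
theorem delta_p_unique_root :
    (∀ p : ℕ, 1 ≤ p → ∃ x : ℝ, 1 / 4 < x ∧ x < 1 / 2 ∧
      ∀ z : ℂ, ‖z‖ < 1 / 2 →
        ((1 - 4 * z + 4 * z ^ (p + 2) = 0) ↔ z = (x : ℂ))) ∧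
    (∀ z : ℂ, 1 - 4 * z + 4 * z ^ (0 + 2) = (1 - 2 * z) ^ 2) := by
  refine ⟨fun p hp => ?_, fun z => by ring⟩
  obtain ⟨x, ⟨hx_gt, hx_lt⟩, hx⟩ := exists_delta_eq_zero_mem_Ioo hp
  have hx_root : 1 - 4 * (x : ℂ) + 4 * (x : ℂ) ^ (p + 2) = 0 := by exact_mod_cast hx
  have hx_norm : ‖(x : ℂ)‖ ≤ 1 / 2 := by
    rw [Complex.norm_real, Real.norm_of_nonneg (by linarith)]
    exact hx_lt.le
  refine ⟨x, hx_gt, hx_lt, fun z hz => ⟨fun hz0 => ?_, fun hzx => hzx ▸ hx_root⟩⟩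
  exact eq_of_delta_eq_zero hp hz.le hx_norm hz0 hx_root
end

section
/- For every p ≥ 1, the sum over all m-labeled unranked trees of size p of the root degree equals 3p·T_{m,p}/(p+2), where T_{m,p} = (1/(p+1))·C(2p,p)·m^{p+1}. -/
/-! Detaching the first child of the root splits a tree with `n + 1` edges into a pair of trees
with `i` and `n - i` edges. For the set `T_n` of trees with `n` edges and `k` labels, the Catalan
recursion then gives `#T_n = C_n k^(n+1)` and `∑_{t ∈ T_n} (deg t + 1) = C_(n+1) k^(n+1)`. So the
root degrees sum to `(C_(p+1) - C_p) k^(p+1)`, and `(p+1)(p+2)(C_(p+1) - C_p) = 3p·binom(2p, p)`. -/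

open Finset

theorem catalan_add_two (n : ℕ) :
    catalan (n + 2) =
      ∑ ij ∈ antidiagonal n, catalan ij.1 * (catalan (ij.2 + 1) + catalan ij.2) := by
  rw [catalan_succ', Finset.Nat.sum_antidiagonal_succ', catalan_succ']
  simp [mul_add, sum_add_distrib, add_comm]

theorem add_one_mul_add_two_mul_catalan_succ (n : ℕ) :
    (n + 1) * (n + 2) * catalan (n + 1) =
      (n + 1) * (n + 2) * catalan n + 3 * n * n.centralBinom := by
  have h := Nat.succ_mul_centralBinom_succ n
  simp only [← succ_mul_catalan_eq_centralBinom] at h ⊢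
  linear_combination h

namespace UTree

variable {σ : Type}

@[simp] lemma edges_node (a : σ) (cs : List (UTree σ)) :
    edges (node a cs) = cs.length + (cs.map edges).sum := by
  simp [edges]

lemma edges_eq_zero_iff {t : UTree σ} : edges t = 0 ↔ ∃ a, t = node a [] := by
  constructor
  · rcases t with ⟨a, _ | ⟨c, cs⟩⟩
    · exact fun _ => ⟨a, rfl⟩
    · simp
  · rintro ⟨a, rfl⟩
    simp

lemma node_nil_injective : Function.Injective fun a : σ => node a [] :=
  fun _ _ h => (node.inj h).1

def consChild (c : UTree σ) : UTree σ → UTree σ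
  | node a cs => node a (c :: cs)

/-- Inverse of `consChild` away from leaves; a leaf `t` is sent to `(t, t)`. -/
def unconsChild : UTree σ → UTree σ × UTree σ
  | node a [] => (node a [], node a [])
  | node a (c :: cs) => (c, node a cs)

@[simp] lemma edges_consChild (c t : UTree σ) :
    edges (consChild c t) = edges c + edges t + 1 := by
  cases t
  simp only [consChild, edges_node, List.length_cons, List.map_cons, List.sum_cons]
  ring

@[simp] lemma rootDeg_consChild (c t : UTree σ) : rootDeg (consChild c t) = rootDeg t + 1 := by
  cases t
  rfl

@[simp] lemma unconsChild_consChild (c t : UTree σ) : unconsChild (consChild c t) = (c, t) := by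
  cases t
  rfl

lemma consChild_unconsChild {t : UTree σ} (h : edges t ≠ 0) :
    consChild (unconsChild t).1 (unconsChild t).2 = t := by
  rcases t with ⟨a, _ | ⟨c, cs⟩⟩
  · simp at h
  · rfl

lemma edges_eq_succ_iff {t : UTree σ} {n : ℕ} :
    edges t = n + 1 ↔ ∃ c t', t = consChild c t' ∧ edges c + edges t' = n := by
  constructor
  · intro h
    refine ⟨_, _, (consChild_unconsChild (by omega)).symm, ?_⟩
    rw [← consChild_unconsChild (t := t) (by omega), edges_consChild] at h
    simpa using h
  · rintro ⟨c, t', rfl, h⟩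
    simp [h]

lemma finite_setOf_edges_eq [Finite σ] (n : ℕ) : {t : UTree σ | edges t = n}.Finite := by
  induction n using Nat.strong_induction_on with
  | _ n ih =>
    rcases n with _ | n
    · refine (Set.finite_range fun a : σ => node a []).subset fun t ht => ?_
      obtain ⟨a, rfl⟩ := edges_eq_zero_iff.1 ht
      exact ⟨a, rfl⟩
    have hpairs : (⋃ ij ∈ antidiagonal n,
        {c : UTree σ | edges c = ij.1} ×ˢ {t : UTree σ | edges t = ij.2}).Finite :=
      (antidiagonal n).finite_toSet.biUnion fun ij hij => by
        rw [mem_coe, HasAntidiagonal.mem_antidiagonal] at hij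
        exact (ih ij.1 (by omega)).prod (ih ij.2 (by omega))
    refine (hpairs.image fun x => consChild x.1 x.2).subset fun t ht => ?_
    obtain ⟨c, t', rfl, h⟩ := edges_eq_succ_iff.1 ht
    exact ⟨(c, t'), Set.mem_biUnion (x := (edges c, edges t')) (by simpa using h) ⟨rfl, rfl⟩,
      rfl⟩

noncomputable def withEdges [Finite σ] (n : ℕ) : Finset (UTree σ) :=
  (finite_setOf_edges_eq n).toFinset

section Finite

variable [Finite σ]

@[simp] lemma mem_withEdges {n : ℕ} {t : UTree σ} : t ∈ withEdges n ↔ edges t = n :=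
  Set.Finite.mem_toFinset _

lemma finsum_edges_eq_sum_withEdges {M : Type*} [AddCommMonoid M] (f : UTree σ → M) (n : ℕ) :
    ∑ᶠ t : {t : UTree σ // edges t = n}, f t.1 = ∑ t ∈ withEdges n, f t :=
  calc _ = ∑ᶠ t ∈ {t : UTree σ | edges t = n}, f t := finsum_set_coe_eq_finsum_mem _
    _ = _ := by rw [← finsum_mem_coe_finset, withEdges, Set.Finite.coe_toFinset]

lemma sum_withEdges_succ {M : Type*} [AddCommMonoid M] (f : UTree σ → M) (n : ℕ) :
    ∑ t ∈ withEdges (n + 1), f t = ∑ ij ∈ antidiagonal n,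
      ∑ c ∈ withEdges ij.1, ∑ t ∈ withEdges ij.2, f (consChild c t) := by
  have hne {t : UTree σ} (ht : t ∈ withEdges (n + 1)) : edges t ≠ 0 := by
    rw [mem_withEdges.1 ht]
    exact n.succ_ne_zero
  have hsigma : ∑ ij ∈ antidiagonal n, ∑ c ∈ withEdges ij.1, ∑ t ∈ withEdges ij.2,
        f (consChild c t) =
      ∑ x ∈ (antidiagonal n).sigma fun ij => withEdges ij.1 ×ˢ withEdges ij.2,
        f (consChild x.2.1 x.2.2) := by
    simp_rw [sum_sigma, sum_product]
  rw [hsigma]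
  refine sum_bij'
    (fun t _ => ⟨(edges (unconsChild t).1, edges (unconsChild t).2), unconsChild t⟩)
    (fun x _ => consChild x.2.1 x.2.2) ?_ ?_ (fun t ht => consChild_unconsChild (hne ht)) ?_
    (fun t ht => by rw [consChild_unconsChild (hne ht)])
  · intro t ht
    obtain ⟨c, t', rfl, h⟩ := edges_eq_succ_iff.1 (mem_withEdges.1 ht)
    simpa using h
  all_goals
    rintro ⟨⟨i, j⟩, c, t⟩ hx
    simp only [mem_sigma, HasAntidiagonal.mem_antidiagonal, mem_product, mem_withEdges] at hx
    simp [← hx.1, hx.2.1, hx.2.2]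

end Finite

section Fintype

variable [Fintype σ]

lemma withEdges_zero : withEdges 0 = univ.map ⟨_, node_nil_injective (σ := σ)⟩ := by
  ext t
  simp only [mem_withEdges, edges_eq_zero_iff, mem_map, mem_univ, true_and]
  exact exists_congr fun a => eq_comm

lemma card_withEdges (n : ℕ) :
    #(withEdges (σ := σ) n) = catalan n * Fintype.card σ ^ (n + 1) := by
  induction n using Nat.strong_induction_on with
  | _ n ih =>
    rcases n with _ | n
    · simp [withEdges_zero]
    calc #(withEdges (σ := σ) (n + 1))
        = ∑ ij ∈ antidiagonal n,
            #(withEdges (σ := σ) ij.1) * #(withEdges (σ := σ) ij.2) := by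
          rw [card_eq_sum_ones, sum_withEdges_succ]
          simp
      _ = ∑ ij ∈ antidiagonal n, catalan ij.1 * catalan ij.2 * Fintype.card σ ^ (n + 2) := by
          refine sum_congr rfl fun ⟨i, j⟩ hij => ?_
          rw [HasAntidiagonal.mem_antidiagonal] at hij
          rw [ih i (by omega), ih j (by omega), ← hij]
          ring
      _ = catalan (n + 1) * Fintype.card σ ^ (n + 1 + 1) := by rw [← sum_mul, catalan_succ']

lemma sum_rootDeg_add_one_withEdges (n : ℕ) :
    ∑ t ∈ withEdges (σ := σ) n, (rootDeg t + 1) =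
      catalan (n + 1) * Fintype.card σ ^ (n + 1) := by
  induction n using Nat.strong_induction_on with
  | _ n ih =>
    rcases n with _ | n
    · simp [withEdges_zero, rootDeg]
    calc ∑ t ∈ withEdges (n + 1), (rootDeg t + 1)
        = ∑ ij ∈ antidiagonal n, #(withEdges (σ := σ) ij.1) *
            (∑ t ∈ withEdges ij.2, (rootDeg t + 1) + #(withEdges (σ := σ) ij.2)) := by
          rw [sum_withEdges_succ]
          refine sum_congr rfl fun ij _ => ?_
          simp only [rootDeg_consChild, sum_add_distrib, sum_const, smul_eq_mul, mul_one]
          ring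
      _ = ∑ ij ∈ antidiagonal n, catalan ij.1 * (catalan (ij.2 + 1) + catalan ij.2) *
            Fintype.card σ ^ (n + 2) := by
          refine sum_congr rfl fun ⟨i, j⟩ hij => ?_
          rw [HasAntidiagonal.mem_antidiagonal] at hij
          rw [ih j (by omega), card_withEdges, card_withEdges, ← hij]
          ring
      _ = catalan (n + 1 + 1) * Fintype.card σ ^ (n + 1 + 1) := by
          rw [← sum_mul, catalan_add_two]

lemma mul_sum_rootDeg_withEdges (n : ℕ) :
    (n + 1) * (n + 2) * ∑ t ∈ withEdges (σ := σ) n, rootDeg t =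
      3 * n * n.centralBinom * Fintype.card σ ^ (n + 1) := by
  have hsplit :
      ∑ t ∈ withEdges (σ := σ) n, rootDeg t + catalan n * Fintype.card σ ^ (n + 1) =
        catalan (n + 1) * Fintype.card σ ^ (n + 1) := by
    rw [← card_withEdges, ← sum_rootDeg_add_one_withEdges, sum_add_distrib, card_eq_sum_ones]
  linear_combination (n + 1) * (n + 2) * hsplit +
    Fintype.card σ ^ (n + 1) * add_one_mul_add_two_mul_catalan_succ n

end Fintype

end UTree

theorem sum_root_degree_unranked_general (m p : ℕ) :
    (p + 1) * (p + 2) *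
        (∑ᶠ t : {t : UTree (Fin m) // UTree.edges t = p}, UTree.rootDeg t.1) =
      3 * p * (Nat.choose (2 * p) p * m ^ (p + 1)) := by
  have h := UTree.mul_sum_rootDeg_withEdges (σ := Fin m) p
  rw [Fintype.card_fin, Nat.centralBinom_eq_two_mul_choose] at h
  rw [UTree.finsum_edges_eq_sum_withEdges, h, mul_assoc]

/-- For `p ≥ 1`, the sum over all `m`-labeled unranked trees of size `p` of the root
degree equals `3p·T_{m,p}/(p+2)`, where `T_{m,p} = (1/(p+1))·C(2p,p)·m^{p+1}`.
(Both sides are multiplied by `(p+1)(p+2)` to clear denominators.) -/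
theorem sum_root_degree_unranked (m p : ℕ) (hp : 1 ≤ p) :
    (p + 1) * (p + 2) *
        (∑ᶠ t : {t : UTree (Fin m) // UTree.edges t = p}, UTree.rootDeg t.1) =
      3 * p * (Nat.choose (2 * p) p * m ^ (p + 1)) :=
  sum_root_degree_unranked_general m p
end

section
/- For every p ≥ 1, the sum over all m-labeled binary trees of size p of the root degree equals (3p/(2p+1))·B_{m,p}, where B_{m,p} = (1/(p+2))·C(2p+2, p+1)·m^{p+1}. -/
inductive BTree (m : ℕ) : Type where
  | node : Fin m → Option (BTree m) → Option (BTree m) → BTree m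

namespace BTree
variable {m : ℕ}

def edges : BTree m → ℕ
  | .node _ none none => 0
  | .node _ (some l) none => 1 + edges l
  | .node _ none (some r) => 1 + edges r
  | .node _ (some l) (some r) => 2 + edges l + edges r

def subs : BTree m → List (BTree m)
  | .node a none none => [.node a none none]
  | .node a (some l) none => .node a (some l) none :: subs l
  | .node a none (some r) => .node a none (some r) :: subs r
  | .node a (some l) (some r) => .node a (some l) (some r) :: (subs l ++ subs r)

def rootDeg : BTree m → ℕ
  | .node _ l r => (if l.isSome then 1 else 0) + (if r.isSome then 1 else 0)

end BTree

/-!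
A tree with `p` edges is a root label together with an ordered pair of optional subtrees whose
node counts add up to `p`. This decomposition shows that there are `m ^ n * catalan n` optional
trees with `n` nodes. The root degree is `2` minus the number of empty children, and the pairs
with an empty left (or right) child are counted by the optional trees with `p` nodes, so the degree
sum is `2 m^(p+1) C(p+1) - 2 m^(p+1) C(p)`. The recurrence `(p + 2) C(p+1) = 2 (2p + 1) C(p)`
then gives the closed form.
-/

open Finset

theorem succ_succ_mul_catalan_succ (n : ℕ) :
    (n + 2) * catalan (n + 1) = 2 * (2 * n + 1) * catalan n := by
  refine Nat.eq_of_mul_eq_mul_left n.succ_pos ?_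
  calc (n + 1) * ((n + 2) * catalan (n + 1))
      = (n + 1) * (n + 1).centralBinom := by rw [← succ_mul_catalan_eq_centralBinom]
    _ = 2 * (2 * n + 1) * ((n + 1) * catalan n) := by
      rw [Nat.succ_mul_centralBinom_succ, succ_mul_catalan_eq_centralBinom]
    _ = (n + 1) * (2 * (2 * n + 1) * catalan n) := by ring

namespace BTree

variable {m : ℕ}

/-- Number of nodes of an optional subtree, `none` being the empty tree. -/
def optSize : Option (BTree m) → ℕ
  | none => 0
  | some t => t.edges + 1

@[simp] theorem optSize_none : optSize (none : Option (BTree m)) = 0 := rfl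

@[simp] theorem optSize_some (t : BTree m) : optSize (some t) = t.edges + 1 := rfl

theorem edges_node (a : Fin m) (l r : Option (BTree m)) :
    (node a l r).edges = optSize l + optSize r := by
  cases l <;> cases r <;> simp only [edges, optSize] <;> ring

def ofProd (x : Fin m × Option (BTree m) × Option (BTree m)) : BTree m :=
  node x.1 x.2.1 x.2.2

theorem ofProd_injective : Function.Injective (ofProd (m := m)) := by
  rintro ⟨a, l, r⟩ ⟨a', l', r'⟩ h
  cases h
  rfl

theorem rootDeg_ofProd (x : Fin m × Option (BTree m) × Option (BTree m)) :
    (ofProd x).rootDeg = (if x.2.1.isSome then 1 else 0) + (if x.2.2.isSome then 1 else 0) :=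
  rfl

open Classical in
noncomputable def optTrees (m : ℕ) : ℕ → Finset (Option (BTree m))
  | 0 => {none}
  | n + 1 =>
    (univ ×ˢ (antidiagonal n).attach.biUnion fun ij =>
      optTrees m ij.1.1 ×ˢ optTrees m ij.1.2).image (some ∘ ofProd)
  decreasing_by
    · have := HasAntidiagonal.antidiagonal.fst_le ij.2; omega
    · have := HasAntidiagonal.antidiagonal.snd_le ij.2; omega

open Classical in
noncomputable def childPairs (m n : ℕ) : Finset (Option (BTree m) × Option (BTree m)) :=
  (antidiagonal n).biUnion fun ij => optTrees m ij.1 ×ˢ optTrees m ij.2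

@[simp] theorem optTrees_zero : optTrees m 0 = {none} := by
  rw [optTrees]

open Classical in
theorem optTrees_succ (n : ℕ) :
    optTrees m (n + 1) = (univ ×ˢ childPairs m n).image (some ∘ ofProd) := by
  rw [optTrees, childPairs, attach_biUnion (s := antidiagonal n) (f := fun ij =>
    optTrees m ij.1 ×ˢ optTrees m ij.2)]

theorem mem_optTrees {n : ℕ} {o : Option (BTree m)} : o ∈ optTrees m n ↔ optSize o = n := by
  induction n using Nat.strong_induction_on generalizing o with
  | _ n ih =>
    rcases n with _ | n
    · cases o <;> simp
    · have mem_childPairs (x : Option (BTree m) × Option (BTree m)) :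
          x ∈ childPairs m n ↔ optSize x.1 + optSize x.2 = n := by
        simp only [childPairs, mem_biUnion, mem_product, HasAntidiagonal.mem_antidiagonal]
        constructor
        · rintro ⟨ij, rfl, hl, hr⟩
          rw [ih _ (by omega)] at hl hr
          rw [hl, hr]
        · intro h
          exact ⟨(optSize x.1, optSize x.2), h, (ih _ (by omega)).2 rfl,
            (ih _ (by omega)).2 rfl⟩
      rcases o with _ | ⟨a, l, r⟩
      · simp [optTrees_succ]
      · simp [optTrees_succ, ofProd, mem_childPairs, edges_node]

theorem mem_childPairs {n : ℕ} {x : Option (BTree m) × Option (BTree m)} :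
    x ∈ childPairs m n ↔ optSize x.1 + optSize x.2 = n := by
  simp [childPairs, mem_optTrees]

theorem card_childPairs (n : ℕ) :
    #(childPairs m n) = ∑ ij ∈ antidiagonal n, #(optTrees m ij.1) * #(optTrees m ij.2) := by
  classical
  rw [childPairs, card_biUnion]
  · simp only [card_product]
  · intro ij _ ij' _ hne
    refine disjoint_left.2 fun x hx hx' => hne ?_
    simp only [mem_product, mem_optTrees] at hx hx'
    exact Prod.ext (hx.1.symm.trans hx'.1) (hx.2.symm.trans hx'.2)

theorem card_optTrees_succ (n : ℕ) : #(optTrees m (n + 1)) = m * #(childPairs m n) := by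
  classical
  rw [optTrees_succ, card_image_of_injective _ ((Option.some_injective _).comp ofProd_injective),
    card_product, card_univ, Fintype.card_fin]

theorem card_optTrees (n : ℕ) : #(optTrees m n) = m ^ n * catalan n := by
  induction n using Nat.strong_induction_on with
  | _ n ih =>
    rcases n with _ | n
    · simp
    · rw [card_optTrees_succ, card_childPairs, catalan_succ', mul_sum, mul_sum, pow_succ']
      refine sum_congr rfl fun ij hij => ?_
      have hij' := HasAntidiagonal.mem_antidiagonal.1 hij
      rw [ih _ (by omega), ih _ (by omega), ← hij']
      ring

theorem card_filter_fst_isSome_add_card_optTrees (n : ℕ) :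
    #{x ∈ childPairs m n | x.1.isSome} + #(optTrees m n) = #(childPairs m n) := by
  have h : {x ∈ childPairs m n | ¬ x.1.isSome} = {none} ×ˢ optTrees m n := by
    ext ⟨l, r⟩
    cases l <;> simp [mem_childPairs, mem_optTrees]
  rw [← card_filter_add_card_filter_not (s := childPairs m n) (fun x => x.1.isSome), h,
    card_product, card_singleton, one_mul]

theorem card_filter_snd_isSome_add_card_optTrees (n : ℕ) :
    #{x ∈ childPairs m n | x.2.isSome} + #(optTrees m n) = #(childPairs m n) := by
  have h : {x ∈ childPairs m n | ¬ x.2.isSome} = optTrees m n ×ˢ {none} := by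
    ext ⟨l, r⟩
    cases r <;> simp [mem_childPairs, mem_optTrees]
  rw [← card_filter_add_card_filter_not (s := childPairs m n) (fun x => x.2.isSome), h,
    card_product, card_singleton, mul_one]

theorem sum_rootDeg_ofProd_add (n : ℕ) :
    ∑ x ∈ univ ×ˢ childPairs m n, (ofProd x).rootDeg + 2 * m * #(optTrees m n) =
      2 * #(optTrees m (n + 1)) := by
  have hsum : ∑ x ∈ univ ×ˢ childPairs m n, (ofProd x).rootDeg =
      m * (#{x ∈ childPairs m n | x.1.isSome} + #{x ∈ childPairs m n | x.2.isSome}) := by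
    rw [sum_product]
    simp only [rootDeg_ofProd, sum_add_distrib, sum_boole, Nat.cast_id, sum_const, card_univ,
      Fintype.card_fin, smul_eq_mul, mul_add]
  rw [hsum, card_optTrees_succ]
  linear_combination m * card_filter_fst_isSome_add_card_optTrees n +
    m * card_filter_snd_isSome_add_card_optTrees n

theorem finsum_rootDeg_eq_sum (p : ℕ) :
    ∑ᶠ t : {t : BTree m // t.edges = p}, t.1.rootDeg =
      ∑ x ∈ univ ×ˢ childPairs m p, (ofProd x).rootDeg := by
  have h : {t : BTree m | t.edges = p} =
      ofProd '' ↑((univ : Finset (Fin m)) ×ˢ childPairs m p) := by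
    ext ⟨a, l, r⟩
    simp [ofProd, mem_childPairs, edges_node]
  calc ∑ᶠ t : {t : BTree m // t.edges = p}, t.1.rootDeg
      = ∑ᶠ t ∈ {t : BTree m | t.edges = p}, t.rootDeg := finsum_set_coe_eq_finsum_mem _
    _ = _ := by rw [h, finsum_mem_image ofProd_injective.injOn, finsum_mem_coe_finset]

end BTree

theorem sum_root_degree_binary_general (m p : ℕ) :
    (p + 2) * (2 * p + 1) *
        (∑ᶠ t : {t : BTree m // BTree.edges t = p}, BTree.rootDeg t.1) =
      3 * p * (Nat.choose (2 * p + 2) (p + 1) * m ^ (p + 1)) := by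
  have hsum := BTree.sum_rootDeg_ofProd_add (m := m) p
  rw [← BTree.finsum_rootDeg_eq_sum, BTree.card_optTrees, BTree.card_optTrees] at hsum
  have hchoose : Nat.choose (2 * p + 2) (p + 1) = (p + 2) * catalan (p + 1) := by
    rw [succ_mul_catalan_eq_centralBinom, Nat.centralBinom, mul_add_one]
  have hcatalan := succ_succ_mul_catalan_succ p
  rw [pow_succ] at hsum
  rw [hchoose, pow_succ]
  zify at hsum hcatalan ⊢
  linear_combination ((p : ℤ) + 2) * (2 * p + 1) * hsum + ((p : ℤ) + 2) * (m ^ p * m) * hcatalan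

/-- For `p ≥ 1`, the sum over all `m`-labeled binary trees of size `p` of the root
degree equals `(3p/(2p+1))·B_{m,p}`, where `B_{m,p} = (1/(p+2))·C(2p+2,p+1)·m^{p+1}`.
(Both sides are multiplied by `(p+2)(2p+1)` to clear denominators.) -/
theorem sum_root_degree_binary (m p : ℕ) (hp : 1 ≤ p) :
    (p + 2) * (2 * p + 1) *
        (∑ᶠ t : {t : BTree m // BTree.edges t = p}, BTree.rootDeg t.1) =
      3 * p * (Nat.choose (2 * p + 2) (p + 1) * m ^ (p + 1)) :=
  sum_root_degree_binary_general m p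
end
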